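/- Let (Γ, I) be a rooted directed graph with the unique simple path property, with unique directed spanning tree T, and let v be a vertex. Then the subgraph v⇓ induced on the set of vertices u with u ≤_T v (reachable from v within T) is rooted at v and has the unique simple path property from v. -/

import Mathlib

/-!
The tree path from `v` to `u` is already simple, since it is the only tree path between its
endpoints and so cannot be shortened, and it stays inside `v⇓`. For uniqueness, prefix a simple
path in `v⇓` from `v` to `u` with the tree path from `I` to `v`: a vertex of that tree path lying
in `v⇓` is both above and below `v` in `≤_T`, hence equals `v`, so the concatenation is a simple
path from `I` and the unique simple path property at `I` applies.
-/

structure DGraph : Type 1 where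
  V : Type
  E : Type
  ι : E → V
  τ : E → V

namespace DGraph

/-- A directed path from `u` to `w` given by its list of edges. -/
inductive Path (G : DGraph) : G.V → G.V → List G.E → Prop
  | nil (v : G.V) : Path G v v []
  | cons (e : G.E) {w : G.V} {p : List G.E} :
      Path G (G.τ e) w p → Path G (G.ι e) w (e :: p)

/-- The list of vertices visited by a path `p` starting at `u`. -/
def verts (G : DGraph) (u : G.V) (p : List G.E) : List G.V :=
  u :: p.map G.τ

/-- A simple directed path: a path visiting no vertex twice. -/
def SimplePath (G : DGraph) (u w : G.V) (p : List G.E) : Prop :=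
  G.Path u w p ∧ (G.verts u p).Nodup

/-- `w` is reachable from `u` by a directed path. -/
def Reach (G : DGraph) (u w : G.V) : Prop := ∃ p, G.Path u w p

/-- A graph is rooted at `v` if every vertex is reachable from `v`. -/
def Rooted (G : DGraph) (v : G.V) : Prop := ∀ w, G.Reach v w

end DGraph


namespace DGraph

/-- A directed path from `u` to `w` all of whose edges lie in `ES`. -/
def PathIn (G : DGraph) (ES : Set G.E) (u w : G.V) (p : List G.E) : Prop :=
  G.Path u w p ∧ ∀ e ∈ p, e ∈ ES

/-- A directed rooted subtree of `G` rooted at `v`, given by a vertex set `VS`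
and an edge set `ES`: it is a subgraph containing `v` in which every vertex is
reached from `v` by a unique directed path. -/
def IsRootedSubtree (G : DGraph) (v : G.V) (VS : Set G.V) (ES : Set G.E) : Prop :=
  v ∈ VS ∧ (∀ e ∈ ES, G.ι e ∈ VS ∧ G.τ e ∈ VS) ∧
    ∀ w ∈ VS, ∃! p : List G.E, G.PathIn ES v w p

/-- A directed spanning tree of `G` rooted at `v`. -/
def IsSpanningTree (G : DGraph) (v : G.V) (ES : Set G.E) : Prop :=
  G.IsRootedSubtree v Set.univ ES

variable {G : DGraph} {ES : Set G.E} {u v w x : G.V} {p q : List G.E}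

@[simp]
theorem verts_append (u : G.V) (p q : List G.E) :
    G.verts u (p ++ q) = G.verts u p ++ q.map G.τ := by
  simp [verts]

namespace Path

theorem append (hp : G.Path u w p) (hq : G.Path w x q) : G.Path u x (p ++ q) := by
  induction hp with
  | nil => exact hq
  | cons e _ ih => exact cons e (ih hq)

theorem eq_of_nil (h : G.Path u w []) : u = w := by
  cases h; rfl

theorem end_mem_verts (hp : G.Path u w p) : w ∈ G.verts u p := by
  induction hp with
  | nil v => exact List.mem_cons_self
  | cons e _ ih => exact List.mem_cons_of_mem _ ih

theorem exists_eq_append_of_mem_verts (hp : G.Path u w p) (hx : x ∈ G.verts u p) :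
    ∃ a b, p = a ++ b ∧ G.Path u x a ∧ G.Path x w b := by
  induction hp with
  | nil v =>
    obtain rfl : x = v := List.mem_singleton.mp hx
    exact ⟨[], [], rfl, nil x, nil x⟩
  | cons e hp ih =>
    rcases List.mem_cons.mp hx with rfl | hx
    · exact ⟨[], _, rfl, nil _, cons e hp⟩
    · obtain ⟨a, b, rfl, ha, hb⟩ := ih hx
      exact ⟨e :: a, b, rfl, cons e ha, hb⟩

theorem exists_eq_append_cons_of_mem {e : G.E} (hp : G.Path u w p) (he : e ∈ p) :
    ∃ a b, p = a ++ e :: b ∧ G.Path u (G.ι e) a ∧ G.Path (G.τ e) w b := by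
  induction hp with
  | nil => simp at he
  | cons f hf ih =>
    rcases List.mem_cons.mp he with rfl | he
    · exact ⟨[], _, rfl, nil _, hf⟩
    · obtain ⟨a, b, rfl, ha, hb⟩ := ih he
      exact ⟨f :: a, b, rfl, cons f ha, hb⟩

end Path

namespace SimplePath

theorem of_append_right {a b : List G.E} (h : G.SimplePath u w (a ++ b))
    (ha : G.Path u x a) (hb : G.Path x w b) : G.SimplePath x w b := by
  refine ⟨hb, h.2.sublist ?_⟩
  rw [verts_append]
  exact (List.singleton_sublist.2 ha.end_mem_verts).append (List.Sublist.refl _)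

theorem append (hp : G.SimplePath u v p) (hq : G.SimplePath v w q)
    (hdisj : (G.verts u p).Disjoint (q.map G.τ)) : G.SimplePath u w (p ++ q) :=
  ⟨hp.1.append hq.1, by
    rw [verts_append, List.nodup_append']
    exact ⟨hp.2, (List.nodup_cons.mp hq.2).2, hdisj⟩⟩

end SimplePath

theorem Path.exists_simplePath_subset (hp : G.Path u w p) :
    ∃ q, G.SimplePath u w q ∧ q ⊆ p := by
  induction hp with
  | nil v => exact ⟨[], ⟨nil v, List.nodup_singleton v⟩, List.Subset.refl _⟩
  | cons e _ ih =>
    obtain ⟨q, hq, hsub⟩ := ih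
    by_cases hmem : G.ι e ∈ G.verts (G.τ e) q
    · obtain ⟨a, b, rfl, ha, hb⟩ := hq.1.exists_eq_append_of_mem_verts hmem
      exact ⟨b, hq.of_append_right ha hb,
        fun f hf => List.mem_cons_of_mem e (hsub (List.mem_append_right a hf))⟩
    · exact ⟨e :: q, ⟨cons e hq.1, List.nodup_cons.mpr ⟨hmem, hq.2⟩⟩, List.cons_subset_cons e hsub⟩

theorem PathIn.append (hp : G.PathIn ES u v p) (hq : G.PathIn ES v w q) :
    G.PathIn ES u w (p ++ q) :=
  ⟨hp.1.append hq.1, fun e he => (List.mem_append.mp he).elim (hp.2 e) (hq.2 e)⟩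

/-- The vertex set of `v⇓`: the vertices below `v` in the tree order `≤_T`. -/
def down (ES : Set G.E) (v : G.V) : Set G.V := {u | ∃ p, G.PathIn ES v u p}

theorem PathIn.endpoints_mem_down {e : G.E} (hp : G.PathIn ES v u p) (he : e ∈ p) :
    G.ι e ∈ down ES v ∧ G.τ e ∈ down ES v := by
  obtain ⟨a, b, rfl, ha, -⟩ := hp.1.exists_eq_append_cons_of_mem he
  have haES : ∀ f ∈ a, f ∈ ES := fun f hf => hp.2 f (List.mem_append_left _ hf)
  have heES : ∀ f ∈ [e], f ∈ ES := fun f hf =>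
    hp.2 f (List.mem_append_right a (List.mem_cons.mpr (.inl (List.mem_singleton.mp hf))))
  exact ⟨⟨a, ha, haES⟩, ⟨a ++ [e], (PathIn.append ⟨ha, haES⟩ ⟨.cons e (.nil _), heES⟩)⟩⟩

namespace IsSpanningTree

variable {I : G.V}

theorem pathIn_unique (hT : G.IsSpanningTree I ES) {p₁ p₂ : List G.E}
    (h₁ : G.PathIn ES v u p₁) (h₂ : G.PathIn ES v u p₂) : p₁ = p₂ := by
  obtain ⟨pv, hpv, -⟩ := hT.2.2 v trivial
  exact List.append_cancel_left ((hT.2.2 u trivial).unique (hpv.append h₁) (hpv.append h₂))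

theorem simplePath_of_pathIn (hT : G.IsSpanningTree I ES) (hp : G.PathIn ES u w p) :
    G.SimplePath u w p := by
  obtain ⟨q, hq, hsub⟩ := hp.1.exists_simplePath_subset
  rwa [hT.pathIn_unique hp ⟨hq.1, fun e he => hp.2 e (hsub he)⟩]

/-- Antisymmetry of the tree order `≤_T`. -/
theorem eq_of_pathIn_of_pathIn (hT : G.IsSpanningTree I ES)
    (hp : G.PathIn ES u w p) (hq : G.PathIn ES w u q) : u = w := by
  have hloop : p ++ q = [] := hT.pathIn_unique (hp.append hq) ⟨.nil u, by simp⟩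
  rw [List.append_eq_nil_iff] at hloop
  exact (hloop.1 ▸ hp.1).eq_of_nil

theorem simplePath_append_of_mem_down (hT : G.IsSpanningTree I ES) (hpv : G.PathIn ES I v p)
    (hq : G.SimplePath v u q) (hqdown : ∀ e ∈ q, G.τ e ∈ down ES v) :
    G.SimplePath I u (p ++ q) := by
  refine (hT.simplePath_of_pathIn hpv).append hq fun x hxp hxq => ?_
  obtain ⟨e, he, rfl⟩ := List.mem_map.mp hxq
  obtain ⟨r, hr⟩ := hqdown e he
  obtain ⟨a, b, rfl, -, hb⟩ := hpv.1.exists_eq_append_of_mem_verts hxp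
  have hbES : ∀ f ∈ b, f ∈ ES := fun f hf => hpv.2 f (List.mem_append_right a hf)
  have hxv : G.τ e = v := (hT.eq_of_pathIn_of_pathIn hr ⟨hb, hbES⟩).symm
  exact (List.nodup_cons.mp hq.2).1 (hxv ▸ hxq)

end IsSpanningTree

theorem down_tree_uspp_general (G : DGraph) (I : G.V)
    (huspp : ∀ w : G.V, ∃! p : List G.E, G.SimplePath I w p)
    (ES : Set G.E) (hT : G.IsSpanningTree I ES) (v : G.V) :
    ∀ u ∈ {u : G.V | ∃ p : List G.E, G.PathIn ES v u p},
      ∃! p : List G.E, G.SimplePath v u p ∧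
        ∀ e ∈ p, G.ι e ∈ {u : G.V | ∃ p : List G.E, G.PathIn ES v u p} ∧
          G.τ e ∈ {u : G.V | ∃ p : List G.E, G.PathIn ES v u p} := by
  rintro u ⟨p, hp⟩
  obtain ⟨pv, hpv, -⟩ := hT.2.2 v trivial
  have hp_down : G.SimplePath v u p ∧ ∀ e ∈ p, G.ι e ∈ down ES v ∧ G.τ e ∈ down ES v :=
    ⟨hT.simplePath_of_pathIn hp, fun e he => hp.endpoints_mem_down he⟩
  refine ⟨p, hp_down, fun q hq => ?_⟩
  have hlift : ∀ r, (G.SimplePath v u r ∧ ∀ e ∈ r, G.ι e ∈ down ES v ∧ G.τ e ∈ down ES v) →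
      G.SimplePath I u (pv ++ r) := fun r hr =>
    hT.simplePath_append_of_mem_down hpv hr.1 fun e he => (hr.2 e he).2
  exact List.append_cancel_left ((huspp u).unique (hlift q hq) (hlift p hp_down))

/-- Let `(Γ, I)` have the unique simple path property with unique directed
spanning tree `T` (edge set `ES`), and let `v` be a vertex.  Then the induced
subgraph `v⇓` on the vertices reachable from `v` within `T` is rooted at `v`
and has the unique simple path property from `v`: each of its vertices is
reached from `v` by a unique simple path lying in `v⇓`. -/
theorem down_tree_uspp (G : DGraph) (I : G.V) (hroot : G.Rooted I)
    (huspp : ∀ w : G.V, ∃! p : List G.E, G.SimplePath I w p)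
    (ES : Set G.E) (hT : G.IsSpanningTree I ES) (v : G.V) :
    ∀ u ∈ {u : G.V | ∃ p : List G.E, G.PathIn ES v u p},
      ∃! p : List G.E, G.SimplePath v u p ∧
        ∀ e ∈ p, G.ι e ∈ {u : G.V | ∃ p : List G.E, G.PathIn ES v u p} ∧
          G.τ e ∈ {u : G.V | ∃ p : List G.E, G.PathIn ES v u p} :=
  down_tree_uspp_general G I huspp ES hT v

end DGraph
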